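/- arXiv:1404.3166 — 2 statements merged into one kernel-verified Lean document; each statement's English description precedes it below -/
import Mathlib

section
/- Let D be an o-stable CRD. With M₁ = {c ∈ min(U) : Φ_D(c) = und}, M₂ = {c ∈ min(U) : Φ_D(c) ∈ {0,1} and c → c' for some c' with Φ_D(c') ≠ Φ_D(c)}, and T = {r ∈ min(U) : (r,p) ∈ R, and either ‖p‖ = 0 or Υ(A) ≠ Υ(B) for some A,B ∈ Λ with r(A) ≠ 0 ≠ p(B)}, we have T ⊆ M₁ ∪ M₂. -/
/-! Firing the reaction `(r, p)` from `r` consumes all of `r` and leaves exactly `p`. Then `p` is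
either empty, so its output is undefined, or contains a voter disagreeing with the unanimous vote
of `r`. -/

/-- Size of a configuration: total number of molecules. -/
def size {Λ : Type*} [Fintype Λ] (c : Λ → ℕ) : ℕ := ∑ i, c i

/-- One reaction step of a CRN with reaction set `R`. -/
def Step {Λ : Type*} (R : Set ((Λ → ℕ) × (Λ → ℕ))) (c c' : Λ → ℕ) : Prop :=
  ∃ rp ∈ R, rp.1 ≤ c ∧ c' = c - rp.1 + rp.2

/-- Reachability: reflexive-transitive closure of one-step reactions. -/
def Reach {Λ : Type*} (R : Set ((Λ → ℕ) × (Λ → ℕ))) : (Λ → ℕ) → (Λ → ℕ) → Prop :=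
  Relation.ReflTransGen (Step R)

open Classical in
/-- Output function Φ_D : `some true` = 1 (only yes voters present),
`some false` = 0 (only no voters present), `none` = und. -/
noncomputable def Phi {Λ : Type*} (Υ : Λ → Bool) (x : Λ → ℕ) : Option Bool :=
  if (∃ A, x A ≠ 0 ∧ Υ A = true) ∧ ¬ (∃ A, x A ≠ 0 ∧ Υ A = false) then some true
  else if (∃ A, x A ≠ 0 ∧ Υ A = false) ∧ ¬ (∃ A, x A ≠ 0 ∧ Υ A = true) then some false
  else none

/-- Output stable configuration. -/
def OStable {Λ : Type*} (R : Set ((Λ → ℕ) × (Λ → ℕ))) (Υ : Λ → Bool) (c : Λ → ℕ) : Prop :=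
  (Phi Υ c).isSome ∧ ∀ c', Reach R c c' → Phi Υ c' = Phi Υ c

/-- Totally stable configuration. -/
def TStable {Λ : Type*} (R : Set ((Λ → ℕ) × (Λ → ℕ))) (Υ : Λ → Bool) (c : Λ → ℕ) : Prop :=
  (Phi Υ c).isSome ∧ ∀ c', Reach R c c' → c' = c

/-- Output unstable configuration: nonzero and not o-stable. -/
def Unstable {Λ : Type*} (R : Set ((Λ → ℕ) × (Λ → ℕ))) (Υ : Λ → Bool) (c : Λ → ℕ) : Prop :=
  c ≠ 0 ∧ ¬ OStable R Υ c

/-- The set U of output unstable configurations. -/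
def UnstableSet {Λ : Type*} (R : Set ((Λ → ℕ) × (Λ → ℕ))) (Υ : Λ → Bool) : Set (Λ → ℕ) :=
  {c | Unstable R Υ c}

/-- min(U): the ≤-minimal output unstable configurations. -/
def minU {Λ : Type*} (R : Set ((Λ → ℕ) × (Λ → ℕ))) (Υ : Λ → Bool) : Set (Λ → ℕ) :=
  {c | Unstable R Υ c ∧ ∀ c', Unstable R Υ c' → c' ≤ c → c' = c}

/-- The relation ↪ on min(U). -/
def Hook {Λ : Type*} (R : Set ((Λ → ℕ) × (Λ → ℕ))) (Υ : Λ → Bool) (c c' : Λ → ℕ) : Prop :=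
  c ∈ minU R Υ ∧ c' ∈ minU R Υ ∧ ∃ rp ∈ R, ∃ b : Λ → ℕ,
    b ≤ rp.2 ∧ b ≠ rp.2 ∧ rp.1 ≤ c ∧ c' + b = c - rp.1 + rp.2

/-- D = (Λ,R,Inp,Υ) is an o-stable CRD: it o-stably decides some function φ
on the initial configurations (nonzero, supported on the input species Inp). -/
def IsOStableCRD {Λ : Type*} (R : Set ((Λ → ℕ) × (Λ → ℕ))) (Inp : Set Λ) (Υ : Λ → Bool) : Prop :=
  ∃ φ : (Λ → ℕ) → Bool, ∀ c : Λ → ℕ, c ≠ 0 → (∀ A ∉ Inp, c A = 0) →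
    ∀ c', Reach R c c' → ∃ c'', Reach R c' c'' ∧ OStable R Υ c'' ∧ Phi Υ c'' = some (φ c)

theorem size_eq_zero_iff {Λ : Type*} [Fintype Λ] {c : Λ → ℕ} : size c = 0 ↔ c = 0 := by
  simp [size, Finset.sum_eq_zero_iff, funext_iff]

theorem step_of_mem {Λ : Type*} {R : Set ((Λ → ℕ) × (Λ → ℕ))} {r p : Λ → ℕ} (h : (r, p) ∈ R) :
    Step R r p :=
  ⟨(r, p), h, le_rfl, by simp⟩

section Phi

variable {Λ : Type*} {Υ : Λ → Bool}

theorem Phi_zero : Phi Υ 0 = none := by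
  simp [Phi]

theorem vote_eq_of_Phi_eq_some {x : Λ → ℕ} {b : Bool} (h : Phi Υ x = some b) {A : Λ}
    (hA : x A ≠ 0) : Υ A = b := by
  unfold Phi at h
  split_ifs at h with h₁ h₂ <;> cases h
  · exact by_contra fun hne => h₁.2 ⟨A, hA, by simpa using hne⟩
  · exact by_contra fun hne => h₂.2 ⟨A, hA, by simpa using hne⟩

theorem Phi_ne_some_of_vote_ne {x : Λ → ℕ} {b : Bool} {B : Λ} (hB : x B ≠ 0) (hv : Υ B ≠ b) :
    Phi Υ x ≠ some b :=
  fun h => hv (vote_eq_of_Phi_eq_some h hB)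

end Phi

theorem stmt7_general {Λ : Type*} [Fintype Λ] (R : Set ((Λ → ℕ) × (Λ → ℕ)))
    (Υ : Λ → Bool) :
    {r ∈ minU R Υ | ∃ p : Λ → ℕ, (r, p) ∈ R ∧
        (size p = 0 ∨ ∃ A B : Λ, Υ A ≠ Υ B ∧ r A ≠ 0 ∧ p B ≠ 0)} ⊆
      {c ∈ minU R Υ | Phi Υ c = none} ∪
      {c ∈ minU R Υ | (Phi Υ c).isSome ∧ ∃ c', Step R c c' ∧ Phi Υ c' ≠ Phi Υ c} := by
  rintro r ⟨hr, p, hrp, hp⟩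
  cases hΦ : Phi Υ r with
  | none => exact Or.inl ⟨hr, hΦ⟩
  | some b =>
    refine Or.inr ⟨hr, by simp [hΦ], p, step_of_mem hrp, ?_⟩
    rw [hΦ]
    rcases hp with hp | ⟨A, B, hAB, hA, hB⟩
    · simp [size_eq_zero_iff.1 hp, Phi_zero]
    · have hΥA : Υ A = b := vote_eq_of_Phi_eq_some hΦ hA
      exact Phi_ne_some_of_vote_ne hB fun hΥB => hAB (hΥA.trans hΥB.symm)

/-- T ⊆ M₁ ∪ M₂. -/
theorem stmt7 {Λ : Type*} [Fintype Λ] (R : Set ((Λ → ℕ) × (Λ → ℕ))) (Inp : Set Λ)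
    (Υ : Λ → Bool) (hD : IsOStableCRD R Inp Υ) :
    {r ∈ minU R Υ | ∃ p : Λ → ℕ, (r, p) ∈ R ∧
        (size p = 0 ∨ ∃ A B : Λ, Υ A ≠ Υ B ∧ r A ≠ 0 ∧ p B ≠ 0)} ⊆
      {c ∈ minU R Υ | Phi Υ c = none} ∪
      {c ∈ minU R Υ | (Phi Υ c).isSome ∧ ∃ c', Step R c c' ∧ Phi Υ c' ≠ Phi Υ c} :=
  stmt7_general R Υ
end

section
/- Let D be an o-stable CRD in which every reaction (r,p) satisfies 2 = ‖r‖ ≥ ‖p‖. If c ↪ c' (for c, c' ∈ min(U)), then ‖c'‖ = ‖c‖ or ‖c'‖ = ‖c‖ − 1. -/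
section Size

variable {Λ : Type*} [Fintype Λ]

theorem size_add (x y : Λ → ℕ) : size (x + y) = size x + size y :=
  Finset.sum_add_distrib

theorem size_lt_size_of_lt {x y : Λ → ℕ} (h : x < y) : size x < size y := by
  obtain ⟨hle, i, hi⟩ := Pi.lt_def.mp h
  exact Finset.sum_lt_sum (fun j _ => hle j) ⟨i, Finset.mem_univ i, hi⟩

theorem size_add_size_eq_of_add_eq_tsub_add {r p c c' b : Λ → ℕ} (hrc : r ≤ c)
    (h : c' + b = c - r + p) : size c' + size b + size r = size c + size p := by
  rw [← size_add, ← size_add, ← size_add, h, add_right_comm, tsub_add_cancel_of_le hrc]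

end Size

theorem stmt9_general {Λ : Type*} [Fintype Λ] (R : Set ((Λ → ℕ) × (Λ → ℕ)))
    (Υ : Λ → Bool)
    (hR : ∀ rp ∈ R, size rp.1 = 2 ∧ size rp.2 ≤ 2)
    (c c' : Λ → ℕ) (h : Hook R Υ c c') :
    size c' = size c ∨ size c' = size c - 1 := by
  obtain ⟨-, -, rp, hrp, b, hbp, hbne, hrc, heq⟩ := h
  obtain ⟨hr, hp⟩ := hR rp hrp
  have hbalance := size_add_size_eq_of_add_eq_tsub_add hrc heq
  have hb := size_lt_size_of_lt (lt_of_le_of_ne hbp hbne)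
  omega

/-- if every reaction (r,p) has 2 = ‖r‖ ≥ ‖p‖, then ↪ preserves
the size or decreases it by exactly one. -/
theorem stmt9 {Λ : Type*} [Fintype Λ] (R : Set ((Λ → ℕ) × (Λ → ℕ))) (Inp : Set Λ)
    (Υ : Λ → Bool) (hD : IsOStableCRD R Inp Υ)
    (hR : ∀ rp ∈ R, size rp.1 = 2 ∧ size rp.2 ≤ 2)
    (c c' : Λ → ℕ) (h : Hook R Υ c c') :
    size c' = size c ∨ size c' = size c - 1 :=
  stmt9_general R Υ hR c c' h
end
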